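/- Let G be a graph with n ≥ 1 vertices, let M = M[IAS(G)], and let q be the cardinality of the smallest transverse circuit of G. If q < (n+1)/2, then 2q − 1 ≥ κ(M). -/

import Mathlib

open scoped ENat

variable {V : Type*} [Fintype V] [DecidableEq V]

/-- The column of the matrix `IAS(G) = (I | A | A+I)` indexed by `(v, i)`:
`i = 0` gives `φ(v)` (identity column), `i = 1` gives `χ(v)` (column of `A`),
`i = 2` gives `ψ(v)` (column of `A + I`). -/
def iasCol (A : Matrix V V (ZMod 2)) : V × Fin 3 → V → ZMod 2 :=
  fun p w =>
    if p.2 = 0 then (if w = p.1 then 1 else 0)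
    else if p.2 = 1 then A w p.1
    else A w p.1 + (if w = p.1 then 1 else 0)

/-- The rank of a subset of the ground set `W(G) = V × Fin 3` of the isotropic
matroid: the GF(2)-rank of the corresponding set of columns. -/
noncomputable def iasRank (A : Matrix V V (ZMod 2)) (S : Set (V × Fin 3)) : ℕ :=
  Module.finrank (ZMod 2) (Submodule.span (ZMod 2) (iasCol A '' S))

/-- The connectivity function `λ(S) = r(S) + r(W - S) - r(M)`. -/
noncomputable def iasLambda (A : Matrix V V (ZMod 2)) (S : Set (V × Fin 3)) : ℕ :=
  iasRank A S + iasRank A Sᶜ - iasRank A Set.univ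

/-- Independence in the isotropic matroid. -/
def iasIndep (A : Matrix V V (ZMod 2)) (S : Set (V × Fin 3)) : Prop :=
  LinearIndependent (ZMod 2) (fun s : S => iasCol A s.1)

/-- Circuits of the isotropic matroid: minimal dependent sets. -/
def iasCircuit (A : Matrix V V (ZMod 2)) (C : Set (V × Fin 3)) : Prop :=
  ¬ iasIndep A C ∧ ∀ S ⊂ C, iasIndep A S

/-- An ordinary `k`-separation: `λ(S) < k` and `|S|, |W - S| ≥ k`. -/
def OrdinarySep (A : Matrix V V (ZMod 2)) (k : ℕ) (S : Set (V × Fin 3)) : Prop :=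
  0 < k ∧ iasLambda A S < k ∧ k ≤ S.ncard ∧ k ≤ Sᶜ.ncard

/-- A cyclic `k`-separation: `λ(S) < k` and both `S` and `W - S` are dependent. -/
def CyclicSep (A : Matrix V V (ZMod 2)) (k : ℕ) (S : Set (V × Fin 3)) : Prop :=
  0 < k ∧ iasLambda A S < k ∧ ¬ iasIndep A S ∧ ¬ iasIndep A Sᶜ

/-- A vertical `k`-separation: `λ(S) < k` and `r(S), r(W - S) ≥ k`. -/
def VerticalSep (A : Matrix V V (ZMod 2)) (k : ℕ) (S : Set (V × Fin 3)) : Prop :=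
  0 < k ∧ iasLambda A S < k ∧ k ≤ iasRank A S ∧ k ≤ iasRank A Sᶜ

/-- `τ(M) = min {k : M has an ordinary k-separation}`, with `min ∅ = ∞`. -/
noncomputable def iasTau (A : Matrix V V (ZMod 2)) : ℕ∞ :=
  sInf {k : ℕ∞ | ∃ m : ℕ, (m : ℕ∞) = k ∧ ∃ S, OrdinarySep A m S}

/-- `κ*(M) = min ({k : M has a cyclic k-separation} ∪ {|W| - r(M)})`. -/
noncomputable def iasKappaStar (A : Matrix V V (ZMod 2)) : ℕ :=
  sInf ({k : ℕ | ∃ S, CyclicSep A k S} ∪ {3 * Fintype.card V - iasRank A Set.univ})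

/-- `κ(M) = min ({k : M has a vertical k-separation} ∪ {r(M)})`. -/
noncomputable def iasKappa (A : Matrix V V (ZMod 2)) : ℕ :=
  sInf ({k : ℕ | ∃ S, VerticalSep A k S} ∪ {iasRank A Set.univ})

/-- The simple graph underlying a looped simple graph given by its adjacency matrix. -/
def toSimpleGraph (A : Matrix V V (ZMod 2)) : SimpleGraph V where
  Adj v w := v ≠ w ∧ A v w = 1 ∧ A w v = 1
  symm := ⟨fun v w ⟨h1, h2, h3⟩ => ⟨Ne.symm h1, h3, h2⟩⟩
  loopless := ⟨fun v h => h.1 rfl⟩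

/-- The open neighborhood `N_G(v)`. -/
def nbhd (A : Matrix V V (ZMod 2)) (v : V) : Set V := {u | u ≠ v ∧ A v u = 1}

/-- `v` is a pendant vertex: `N_G(v) = {w}` for some `w`. -/
def IsPendant (A : Matrix V V (ZMod 2)) (v : V) : Prop := ∃ w, nbhd A v = {w}

/-- `G` has a pair of twin vertices: `v ≠ w` with `N_G(v) - {w} = N_G(w) - {v}`. -/
def HasTwins (A : Matrix V V (ZMod 2)) : Prop :=
  ∃ v w, v ≠ w ∧ nbhd A v \ {w} = nbhd A w \ {v}

/-- The cut-rank `c_G(X)`: the GF(2)-rank of the submatrix `A[V - X, X]`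
(columns indexed by `X`, rows indexed by `V - X`). -/
noncomputable def cutRank (A : Matrix V V (ZMod 2)) (X : Set V) : ℕ :=
  Module.finrank (ZMod 2)
    (Submodule.span (ZMod 2) ((fun x : V => fun w : ↥(Xᶜ) => A w.1 x) '' X))

/-- `τ_G(X) = ⋃_{x ∈ X} τ_G(x)`, the union of the vertex triples of members of `X`. -/
def tauSet (X : Set V) : Set (V × Fin 3) := {p | p.1 ∈ X}

/-- Loop complementation at `v`. -/
def loopComp (A : Matrix V V (ZMod 2)) (v : V) : Matrix V V (ZMod 2) :=
  fun x y => A x y + if x = v ∧ y = v then 1 else 0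

/-- Simple local complementation at `v`. -/
def simpleLocalComp (A : Matrix V V (ZMod 2)) (v : V) : Matrix V V (ZMod 2) :=
  fun x y => A x y +
    if x ≠ y ∧ (x ≠ v ∧ A v x = 1) ∧ (y ≠ v ∧ A v y = 1) then 1 else 0

/-- Non-simple local complementation at `v`. -/
def nonSimpleLocalComp (A : Matrix V V (ZMod 2)) (v : V) : Matrix V V (ZMod 2) :=
  fun x y => simpleLocalComp A v x y + if x = y ∧ x ≠ v ∧ A v x = 1 then 1 else 0

/-- One local move. -/
def LocalStep (A B : Matrix V V (ZMod 2)) : Prop :=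
  ∃ v, B = loopComp A v ∨ B = simpleLocalComp A v ∨ B = nonSimpleLocalComp A v

/-- Local equivalence: a finite sequence of loop complementations and
(simple or non-simple) local complementations. -/
def LocallyEquiv (A B : Matrix V V (ZMod 2)) : Prop :=
  Relation.ReflTransGen LocalStep A B

/-- `G` has a split: a bipartition `(V₁, V₂)` of `V` with `|V₁|, |V₂| ≥ 2` such that the
GF(2)-rank of `A[V₁, V₂]` is at most 1. -/
def HasSplit (A : Matrix V V (ZMod 2)) : Prop :=
  ∃ X : Set V, 2 ≤ X.ncard ∧ 2 ≤ Xᶜ.ncard ∧ cutRank A X ≤ 1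

/-- A transverse circuit: a circuit of the isotropic matroid meeting each
vertex triple at most once. -/
def IsTransverseCircuit (A : Matrix V V (ZMod 2)) (C : Set (V × Fin 3)) : Prop :=
  iasCircuit A C ∧ ∀ p ∈ C, ∀ q ∈ C, p.1 = q.1 → p = q

/-- An isotropic `k`-separation of `G`: `|X|, |V - X| ≥ k` and `c_G(X) < k`. -/
def IsotropicSep (A : Matrix V V (ZMod 2)) (k : ℕ) (X : Set V) : Prop :=
  k ≤ X.ncard ∧ k ≤ Xᶜ.ncard ∧ cutRank A X < k

/-- The isotropic connectivity `κ_B(G)`, with `min ∅ = ∞`. -/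
noncomputable def kappaB (A : Matrix V V (ZMod 2)) : ℕ∞ :=
  sInf {j : ℕ∞ | ∃ k : ℕ, (k : ℕ∞) = j ∧ ∃ X, IsotropicSep A k X}

/-- The 5-cycle `C₅`. -/
def C5mat : Matrix (Fin 5) (Fin 5) (ZMod 2) :=
  fun i j => if (i.val + 1) % 5 = j.val ∨ (j.val + 1) % 5 = i.val then 1 else 0

/-- The wheel `W₅` : a 5-cycle on `{0,…,4}` plus a hub `5` adjacent to all. -/
def W5mat : Matrix (Fin 6) (Fin 6) (ZMod 2) :=
  fun i j =>
    if (i.val = 5 ∧ j.val ≠ 5) ∨ (j.val = 5 ∧ i.val ≠ 5) then 1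
    else if i.val ≠ 5 ∧ j.val ≠ 5 ∧ ((i.val + 1) % 5 = j.val ∨ (j.val + 1) % 5 = i.val) then 1
    else 0

/-! Let `C` be a smallest transverse circuit, `|C| = q`, and `X ⊆ V` its set of vertices. The
kernel of the restriction to the coordinates outside `X` is spanned by the `φ`-columns of `X`, and
it maps the `χ`- and `ψ`-columns of `X` onto the columns of `A[V - X, X]`; rank-nullity gives
`r(τ(X)) = |X| + c(X)` for the cut-rank `c`. As `A` is symmetric, `c(V - X) = c(X)`, so
`λ(τ(X)) = 2 c(X)`. The same restriction sends a dependency of `C` to one among the columns of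
`A[V - X, X]` (it cannot be supported on `φ`-columns alone), hence `c(X) < q ≤ n - q`, and
`τ(X)` is a vertical `(2 c(X) + 1)`-separation: `κ ≤ 2 c(X) + 1 ≤ 2q - 1`. -/

open Module Submodule

theorem LinearMap.finrank_map_add_finrank_ker_of_ker_le {K M N : Type*} [Field K]
    [AddCommGroup M] [Module K M] [AddCommGroup N] [Module K N] [FiniteDimensional K M]
    (f : M →ₗ[K] N)
    {P : Submodule K M} (h : LinearMap.ker f ≤ P) :
    finrank K (P.map f) + finrank K (LinearMap.ker f) = finrank K P := by
  have := LinearMap.finrank_range_add_finrank_ker (f.domRestrict P)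
  rwa [LinearMap.range_domRestrict, LinearMap.ker_domRestrict,
    (comapSubtypeEquivOfLe h).finrank_eq] at this

section IsotropicMatroid

variable (A : Matrix V V (ZMod 2))

omit [Fintype V] in
theorem iasCol_zero (v : V) : iasCol A (v, 0) = Pi.single v 1 := by
  funext w
  simp [iasCol, Pi.single_apply]

omit [Fintype V] in
theorem iasCol_apply_of_ne {p : V × Fin 3} {w : V} (h : w ≠ p.1) :
    iasCol A p w = if p.2 = 0 then 0 else A w p.1 := by
  unfold iasCol
  split_ifs <;> simp_all

theorem iasRank_univ : iasRank A Set.univ = Fintype.card V := by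
  have htop : span (ZMod 2) (iasCol A '' Set.univ) = ⊤ := by
    rw [eq_top_iff, ← (Pi.basisFun (ZMod 2) V).span_eq, span_le]
    rintro - ⟨v, rfl⟩
    exact subset_span ⟨(v, 0), trivial, by rw [iasCol_zero, Pi.basisFun_apply]⟩
  rw [iasRank, htop, finrank_top, finrank_fintype_fun_eq_card]

abbrev restrictCompl (X : Set V) : (V → ZMod 2) →ₗ[ZMod 2] (↥Xᶜ → ZMod 2) :=
  LinearMap.funLeft (ZMod 2) (ZMod 2) Subtype.val

omit [Fintype V] in
theorem restrictCompl_iasCol {X : Set V} {p : V × Fin 3} (hp : p.1 ∈ X) :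
    restrictCompl X (iasCol A p) = if p.2 = 0 then 0 else fun w : ↥Xᶜ => A w p.1 := by
  funext w
  have hw : (w : V) ≠ p.1 := fun h => w.2 (h ▸ hp)
  change iasCol A p w = _
  rw [iasCol_apply_of_ne A hw]
  split_ifs <;> rfl

omit [Fintype V] in
theorem cutRank_eq_finrank_map (X : Set V) :
    cutRank A X =
      finrank (ZMod 2) ((span (ZMod 2) (iasCol A '' tauSet X)).map (restrictCompl X)) := by
  have hspan : span (ZMod 2) ((fun x : V => fun w : ↥Xᶜ => A w x) '' X)
      = span (ZMod 2) (restrictCompl X '' (iasCol A '' tauSet X)) := by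
    apply le_antisymm
    · rw [span_le]
      rintro - ⟨v, hv, rfl⟩
      exact subset_span ⟨iasCol A (v, 1), ⟨(v, 1), hv, rfl⟩, by
        simp [restrictCompl_iasCol A (p := (v, 1)) hv]⟩
    · rw [span_le]
      rintro - ⟨-, ⟨p, hp, rfl⟩, rfl⟩
      by_cases h : p.2 = 0
      · simp only [SetLike.mem_coe, restrictCompl_iasCol A (X := X) hp, h, if_true]
        exact zero_mem _
      · simp only [SetLike.mem_coe, restrictCompl_iasCol A (X := X) hp, h, if_false]
        exact subset_span ⟨p.1, hp, rfl⟩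
  rw [cutRank, map_span, hspan]

theorem ker_restrictCompl_le (X : Set V) :
    LinearMap.ker (restrictCompl X) ≤ span (ZMod 2) (iasCol A '' tauSet X) := by
  intro f hf
  rw [pi_eq_sum_univ' f]
  refine sum_mem fun v _ => ?_
  by_cases hv : v ∈ X
  · exact smul_mem _ _ (subset_span ⟨(v, 0), hv, iasCol_zero A v⟩)
  · rw [show f v = 0 from congrFun hf ⟨v, hv⟩, zero_smul]
    exact zero_mem _

omit [DecidableEq V] in
theorem ncard_add_ncard_compl_eq_card (X : Set V) : X.ncard + Xᶜ.ncard = Fintype.card V := by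
  rw [Set.ncard_add_ncard_compl, Nat.card_eq_fintype_card]

omit [DecidableEq V] in
theorem finrank_ker_restrictCompl (X : Set V) :
    finrank (ZMod 2) (LinearMap.ker (restrictCompl X)) = X.ncard := by
  classical
  have := LinearMap.finrank_range_add_finrank_ker (restrictCompl X)
  rw [LinearMap.range_eq_top.2 (LinearMap.funLeft_surjective_of_injective _ _ _
    Subtype.val_injective), finrank_top, finrank_fintype_fun_eq_card,
    finrank_fintype_fun_eq_card, ← Nat.card_eq_fintype_card, Nat.card_coe_set_eq,
    ← ncard_add_ncard_compl_eq_card X] at this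
  omega

theorem iasRank_tauSet (X : Set V) : iasRank A (tauSet X) = X.ncard + cutRank A X := by
  rw [iasRank, ← (restrictCompl X).finrank_map_add_finrank_ker_of_ker_le
    (ker_restrictCompl_le A X), ← cutRank_eq_finrank_map, finrank_ker_restrictCompl, add_comm]

omit [Fintype V] [DecidableEq V] in
theorem cutRank_eq_finrank_range (X : Set V) :
    cutRank A X = (Set.range fun (x : X) (w : ↥Xᶜ) => A w x).finrank (ZMod 2) := by
  rw [cutRank, Set.image_eq_range]
  rfl

omit [Fintype V] [DecidableEq V] in
theorem cutRank_eq_rank_submatrix (X : Set V) [Fintype X] :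
    cutRank A X = (A.submatrix (Subtype.val : ↥Xᶜ → V) (Subtype.val : X → V)).rank := by
  rw [cutRank_eq_finrank_range, Matrix.rank_eq_finrank_span_cols]
  rfl

omit [DecidableEq V] in
theorem cutRank_compl (hA : A.IsSymm) (X : Set V) : cutRank A Xᶜ = cutRank A X := by
  classical
  rw [cutRank_eq_rank_submatrix, cutRank_eq_rank_submatrix, ← Matrix.rank_transpose,
    Matrix.transpose_submatrix, hA.eq]
  exact Matrix.rank_submatrix (A.submatrix (Subtype.val : ↥Xᶜ → V) (Subtype.val : X → V))
    (Equiv.refl _) (Equiv.setCongr (compl_compl X))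

omit [DecidableEq V] in
theorem linearIndependent_cut_iff (X : Set V) :
    LinearIndependent (ZMod 2) (fun (x : X) (w : ↥Xᶜ) => A w x) ↔ cutRank A X = X.ncard := by
  classical
  rw [linearIndependent_iff_card_eq_finrank_span, ← cutRank_eq_finrank_range,
    ← Nat.card_coe_set_eq, Nat.card_eq_fintype_card, eq_comm]

omit [DecidableEq V] in
theorem cutRank_le_ncard (X : Set V) : cutRank A X ≤ X.ncard := by
  classical
  rw [cutRank_eq_finrank_range, ← Nat.card_coe_set_eq, Nat.card_eq_fintype_card]
  exact finrank_range_le_card _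

omit [Fintype V] in
theorem linearIndependent_iasCol_of_linearIndependent_cut {X : Set V} (σ : X → V × Fin 3)
    (hσ : ∀ x, (σ x).1 = x)
    (hcut : LinearIndependent (ZMod 2) (fun (x : X) (w : ↥Xᶜ) => A w x)) :
    LinearIndependent (ZMod 2) (fun x => iasCol A (σ x)) := by
  rw [linearIndependent_iff'] at hcut ⊢
  intro s l hl
  have hcoord : ∀ w, ∑ x ∈ s, l x * iasCol A (σ x) w = 0 := fun w => by
    simpa [Finset.sum_apply] using congrFun hl w
  have hχψ : ∀ x ∈ s, (σ x).2 ≠ 0 → l x = 0 := by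
    intro x hx h
    simpa [h] using hcut s (fun x => if (σ x).2 = 0 then 0 else l x) (by
      funext w
      have hw : ∀ x : X, (w : V) ≠ (σ x).1 := fun x h => w.2 (h ▸ (hσ x).symm ▸ x.2)
      simpa [Finset.sum_apply, iasCol_apply_of_ne A (hw _), ite_apply, hσ] using hcoord w) x hx
  intro x hx
  by_cases h : (σ x).2 = 0
  · have := hcoord x
    rw [Finset.sum_eq_single x] at this
    · simpa [iasCol, h, hσ] using this
    · intro y hy hyx
      by_cases hy0 : (σ y).2 = 0
      · have hxy : (x : V) ≠ (σ y).1 := by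
          rw [hσ]
          exact fun h => hyx (Subtype.ext h.symm)
        rw [iasCol_apply_of_ne A hxy, if_pos hy0, mul_zero]
      · rw [hχψ y hy hy0, zero_mul]
    · exact fun hxs => absurd hx hxs
  · exact hχψ x hx h

theorem cutRank_image_fst_lt_ncard {C : Set (V × Fin 3)} (hC : ¬ iasIndep A C)
    (hinj : Set.InjOn Prod.fst C) : cutRank A (Prod.fst '' C) < C.ncard := by
  rw [← hinj.ncard_image]
  refine (cutRank_le_ncard A _).lt_of_ne fun heq => hC ?_
  let e := Equiv.Set.imageOfInjOn Prod.fst C hinj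
  exact (linearIndependent_equiv e.symm).1 <|
    linearIndependent_iasCol_of_linearIndependent_cut A (fun x => (e.symm x).1)
      (fun x => congrArg Subtype.val (e.apply_symm_apply x))
      ((linearIndependent_cut_iff A _).2 heq)

theorem iasLambda_tauSet (hA : A.IsSymm) (X : Set V) :
    iasLambda A (tauSet X) = 2 * cutRank A X := by
  have hcompl : iasRank A (tauSet X)ᶜ = Xᶜ.ncard + cutRank A X := by
    rw [show (tauSet X)ᶜ = tauSet Xᶜ from rfl, iasRank_tauSet, cutRank_compl A hA]
  rw [iasLambda, iasRank_tauSet, hcompl, iasRank_univ, ← ncard_add_ncard_compl_eq_card X]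
  omega

theorem verticalSep_tauSet (hA : A.IsSymm) {X : Set V} (hX : cutRank A X < X.ncard)
    (hXc : cutRank A X < Xᶜ.ncard) : VerticalSep A (2 * cutRank A X + 1) (tauSet X) := by
  refine ⟨Nat.succ_pos _, by rw [iasLambda_tauSet A hA]; omega, ?_, ?_⟩
  · rw [iasRank_tauSet]
    omega
  · rw [show (tauSet X)ᶜ = tauSet Xᶜ from rfl, iasRank_tauSet, cutRank_compl A hA]
    omega

omit [Fintype V] in
theorem iasKappa_le_of_verticalSep {k : ℕ} {S : Set (V × Fin 3)} (h : VerticalSep A k S) :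
    iasKappa A ≤ k :=
  Nat.sInf_le (Or.inl ⟨S, h⟩)

end IsotropicMatroid

theorem stmt16_general (A : Matrix V V (ZMod 2)) (hA : A.IsSymm)
    (q : ℕ) (hq : IsLeast {m : ℕ | ∃ C, IsTransverseCircuit A C ∧ C.ncard = m} q)
    (hlt : 2 * q < Fintype.card V + 1) :
    iasKappa A ≤ 2 * q - 1 := by
  obtain ⟨⟨C, ⟨⟨hdep, -⟩, htr⟩, rfl⟩, -⟩ := hq
  have hinj : Set.InjOn Prod.fst C := fun p hp p' hp' h => htr p hp p' hp' h
  have hX : (Prod.fst '' C).ncard = C.ncard := hinj.ncard_image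
  have hcut := cutRank_image_fst_lt_ncard A hdep hinj
  have hcard := ncard_add_ncard_compl_eq_card (Prod.fst '' C)
  have hsep := verticalSep_tauSet A hA (X := Prod.fst '' C) (by omega) (by omega)
  have := iasKappa_le_of_verticalSep A hsep
  omega

theorem stmt16 (A : Matrix V V (ZMod 2)) (hA : A.IsSymm) (hn : 1 ≤ Fintype.card V)
    (q : ℕ) (hq : IsLeast {m : ℕ | ∃ C, IsTransverseCircuit A C ∧ C.ncard = m} q)
    (hlt : 2 * q < Fintype.card V + 1) :
    iasKappa A ≤ 2 * q - 1 :=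
  stmt16_general A hA q hq hlt
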